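/- Let X be a positive semidefinite operator on (ℂ^k)^⊗N satisfying X = Π_S X Π_S, where Π_S is the projector onto the permutationally symmetric subspace, and assume N ≥ 3. Then the maximum of ⟨φ|X|φ⟩ over all product states |φ⟩ = |a₁⟩⊗…⊗|a_N⟩ of unit vectors equals the maximum over symmetric product states |a⟩^⊗N. -/

import Mathlib

open scoped BigOperators

/-- The permutationally symmetric subspace of (ℂ^k)^⊗N, in the product-basis
coefficient representation with the Euclidean (Hilbert–Schmidt) inner product. -/
noncomputable def symmSubspace (N k : ℕ) :
    Submodule ℂ (EuclideanSpace ℂ (Fin N → Fin k)) where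
  carrier := {ψ | ∀ (σ : Equiv.Perm (Fin N)) (s : Fin N → Fin k), ψ (s ∘ σ) = ψ s}
  add_mem' := by intro a b ha hb σ s; simp [ha σ s, hb σ s]
  zero_mem' := by intro σ s; rfl
  smul_mem' := by intro c a ha σ s; simp [ha σ s]

/-- The product state |a₁⟩⊗…⊗|a_N⟩ in the coefficient representation. -/
noncomputable def productVec {N k : ℕ} (a : Fin N → Fin k → ℂ) :
    EuclideanSpace ℂ (Fin N → Fin k) :=
  (WithLp.equiv 2 _).symm (fun s => ∏ i, a i (s i))

/-!
Let `f(a) = ⟨φ_a, X φ_a⟩` on configurations `a` of unit vectors, where `φ_a = a₁ ⊗ ⋯ ⊗ a_N`.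
By compactness there is a maximiser of `f` which, among all maximisers, also maximises the Gram
potential `∑ l l', |⟨a_l, a_l'⟩|²`. Suppose two of its rows `x = a_i`, `y = a_j` were not
parallel, and let `a₊`, `a₋` be the configurations with both rows replaced by the normalisation of
`x + y`, resp. `x - y`. Since `X` only sees the symmetric part of a vector and
`φ_a + (i j) • φ_a = ½ (φ_{x+y,x+y} - φ_{x-y,x-y})`, positivity of `X` gives
`f(a) ≤ (|x+y|²/4) f(a₊) + (|x-y|²/4) f(a₋)`, with weights summing to `1`. So `a₊` and `a₋` are
maximisers too, yet the same average of their Gram potentials exceeds that of `a` by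
`2 (1 - |⟨x, y⟩|²) > 0`. Hence all rows of `a` are parallel, and `φ_a` is a phase times the
symmetric product state of any of them.
-/

open Finset WithLp NormedSpace

section UpdatePair

variable {ι α : Type*} [DecidableEq ι]

@[to_additive]
lemma Finset.prod_eq_mul_mul_prod_compl {M : Type*} [CommMonoid M] [Fintype ι] {i j : ι}
    (hij : i ≠ j) (f : ι → M) : ∏ l, f l = f i * f j * ∏ l ∈ ({i, j} : Finset ι)ᶜ, f l := by
  rw [← prod_mul_prod_compl {i, j} f, prod_pair hij]

def updatePair (v : ι → α) (i j : ι) (u : α) : ι → α :=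
  fun l => if l = i ∨ l = j then u else v l

@[simp]
lemma updatePair_apply_left (v : ι → α) (i j : ι) (u : α) : updatePair v i j u i = u := by
  simp [updatePair]

@[simp]
lemma updatePair_apply_right (v : ι → α) (i j : ι) (u : α) : updatePair v i j u j = u := by
  simp [updatePair]

lemma updatePair_apply_of_mem_compl [Fintype ι] {v : ι → α} {i j l : ι} (u : α)
    (hl : l ∈ ({i, j} : Finset ι)ᶜ) : updatePair v i j u l = v l := by
  simp_all [updatePair]

lemma norm_updatePair_eq_one [Norm α] {v : ι → α} (hv : ∀ l, ‖v l‖ = 1) (i j : ι) {u : α}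
    (hu : ‖u‖ = 1) (l : ι) : ‖updatePair v i j u l‖ = 1 := by
  unfold updatePair; split_ifs <;> simp [hu, hv]

end UpdatePair

section InnerProduct

variable {E : Type*} [NormedAddCommGroup E] [InnerProductSpace ℂ E]

lemma sq_norm_mul_sq_norm_inner_normalize (b w : E) :
    ‖w‖ ^ 2 * ‖inner ℂ b (normalize w)‖ ^ 2 = ‖inner ℂ b w‖ ^ 2 := by
  conv_rhs => rw [← norm_smul_normalize w, RCLike.real_smul_eq_coe_smul (K := ℂ),
    inner_smul_right, norm_mul]
  simp [mul_pow]

lemma add_ne_zero_and_sub_ne_zero_of_norm_inner_ne_one {x y : E} (hx : ‖x‖ = 1)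
    (h : ‖inner ℂ x y‖ ≠ 1) : x + y ≠ 0 ∧ x - y ≠ 0 := by
  have hxx : ‖inner ℂ x x‖ = 1 := by simp [inner_self_eq_norm_sq_to_K, hx]
  refine ⟨fun h0 => h ?_, fun h0 => h ?_⟩
  · rw [eq_neg_of_add_eq_zero_right h0, inner_neg_right, norm_neg, hxx]
  · rw [← sub_eq_zero.mp h0, hxx]

lemma sq_norm_inner_lt_one_of_ne {x y : E} (hx : ‖x‖ = 1) (hy : ‖y‖ = 1)
    (h : ‖inner ℂ x y‖ ≠ 1) : ‖inner ℂ x y‖ ^ 2 < 1 := by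
  have hle := norm_inner_le_norm (𝕜 := ℂ) x y
  rw [hx, hy, one_mul] at hle
  nlinarith [norm_nonneg (inner ℂ x y), lt_of_le_of_ne hle h]

lemma exists_eq_smul_of_norm_inner_eq_one {ι : Type*} [Nontrivial E] {p : ι → E}
    (hp : ∀ l, ‖p l‖ = 1) (h : ∀ i j, ‖inner ℂ (p i) (p j)‖ = 1) :
    ∃ b : E, ‖b‖ = 1 ∧ ∃ r : ι → ℂ, (∀ l, ‖r l‖ = 1) ∧ p = fun l => r l • b := by
  rcases isEmpty_or_nonempty ι with _ | ⟨⟨i₀⟩⟩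
  · obtain ⟨b, hb⟩ := exists_norm_eq E zero_le_one
    exact ⟨b, hb, fun _ => 1, isEmptyElim, funext isEmptyElim⟩
  have hne : ∀ l, p l ≠ 0 := fun l h0 => by simpa [h0] using hp l
  have hr : ∀ l, ∃ r : ℂ, ‖r‖ = 1 ∧ p l = r • p i₀ := fun l => by
    obtain ⟨r, -, hr⟩ := (norm_inner_eq_norm_iff (hne i₀) (hne l)).mp (by rw [h, hp, hp, one_mul])
    refine ⟨r, ?_, hr⟩
    simpa [hp, norm_smul] using congrArg norm hr.symm
  choose r hr1 hr2 using hr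
  exact ⟨p i₀, hp i₀, r, hr1, funext hr2⟩

end InnerProduct

section Gram

variable {ι E : Type*} [Fintype ι] [NormedAddCommGroup E] [InnerProductSpace ℂ E]

noncomputable def gramPotential (v : ι → E) : ℝ :=
  ∑ l, ∑ l', ‖inner ℂ (v l) (v l')‖ ^ 2

lemma continuous_gramPotential : Continuous (gramPotential : (ι → E) → ℝ) := by
  unfold gramPotential; fun_prop

variable [DecidableEq ι]

lemma gramPotential_eq_pair_add {i j : ι} (hij : i ≠ j) (v : ι → E) :
    gramPotential v = ‖inner ℂ (v i) (v i)‖ ^ 2 + ‖inner ℂ (v j) (v j)‖ ^ 2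
      + 2 * ‖inner ℂ (v i) (v j)‖ ^ 2
      + 2 * ∑ l ∈ ({i, j} : Finset ι)ᶜ, (‖inner ℂ (v l) (v i)‖ ^ 2 + ‖inner ℂ (v l) (v j)‖ ^ 2)
      + ∑ l ∈ ({i, j} : Finset ι)ᶜ, ∑ l' ∈ ({i, j} : Finset ι)ᶜ, ‖inner ℂ (v l) (v l')‖ ^ 2 := by
  have hi : ∑ l ∈ ({i, j} : Finset ι)ᶜ, ‖inner ℂ (v i) (v l)‖ ^ 2
      = ∑ l ∈ ({i, j} : Finset ι)ᶜ, ‖inner ℂ (v l) (v i)‖ ^ 2 := by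
    simp only [norm_inner_symm (v i)]
  have hj : ∑ l ∈ ({i, j} : Finset ι)ᶜ, ‖inner ℂ (v j) (v l)‖ ^ 2
      = ∑ l ∈ ({i, j} : Finset ι)ᶜ, ‖inner ℂ (v l) (v j)‖ ^ 2 := by
    simp only [norm_inner_symm (v j)]
  simp only [gramPotential, Finset.sum_eq_add_add_sum_compl hij, sum_add_distrib]
  rw [hi, hj, norm_inner_symm (v j) (v i)]
  ring

lemma gramPotential_updatePair {i j : ι} (hij : i ≠ j) (v : ι → E) {u : E} (hu : ‖u‖ = 1) :
    gramPotential (updatePair v i j u) = 4 + 4 * ∑ l ∈ ({i, j} : Finset ι)ᶜ, ‖inner ℂ (v l) u‖ ^ 2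
      + ∑ l ∈ ({i, j} : Finset ι)ᶜ, ∑ l' ∈ ({i, j} : Finset ι)ᶜ, ‖inner ℂ (v l) (v l')‖ ^ 2 := by
  have huu : ‖inner ℂ u u‖ = 1 := by simp [inner_self_eq_norm_sq_to_K, hu]
  rw [gramPotential_eq_pair_add hij]
  simp only [updatePair_apply_left, updatePair_apply_right, huu]
  rw [sum_congr rfl fun l hl => by rw [updatePair_apply_of_mem_compl u hl],
    sum_congr rfl fun l hl => sum_congr rfl fun l' hl' => by
      rw [updatePair_apply_of_mem_compl u hl, updatePair_apply_of_mem_compl u hl']]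
  simp only [← two_mul, ← mul_sum]
  ring

lemma gramPotential_average {i j : ι} (hij : i ≠ j) {v : ι → E} (hx : ‖v i‖ = 1)
    (hy : ‖v j‖ = 1) (hp : v i + v j ≠ 0) (hm : v i - v j ≠ 0) :
    ‖v i + v j‖ ^ 2 / 4 * gramPotential (updatePair v i j (normalize (v i + v j)))
      + ‖v i - v j‖ ^ 2 / 4 * gramPotential (updatePair v i j (normalize (v i - v j)))
      = gramPotential v + 2 * (1 - ‖inner ℂ (v i) (v j)‖ ^ 2) := by
  have hsum : ‖v i + v j‖ ^ 2 + ‖v i - v j‖ ^ 2 = 4 := by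
    rw [parallelogram_law_with_norm ℂ, hx, hy]; norm_num
  have hrows : ‖v i + v j‖ ^ 2 * ∑ l ∈ ({i, j} : Finset ι)ᶜ,
        ‖inner ℂ (v l) (normalize (v i + v j))‖ ^ 2
      + ‖v i - v j‖ ^ 2 * ∑ l ∈ ({i, j} : Finset ι)ᶜ, ‖inner ℂ (v l) (normalize (v i - v j))‖ ^ 2
      = 2 * ∑ l ∈ ({i, j} : Finset ι)ᶜ,
          (‖inner ℂ (v l) (v i)‖ ^ 2 + ‖inner ℂ (v l) (v j)‖ ^ 2) := by
    simp only [mul_sum, ← sum_add_distrib, sq_norm_mul_sq_norm_inner_normalize,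
      inner_add_right, inner_sub_right, parallelogram_law_with_norm ℂ]
  have hself : ∀ l, ‖inner ℂ (v l) (v l)‖ = ‖v l‖ ^ 2 := fun l => by
    simp [inner_self_eq_norm_sq_to_K]
  rw [gramPotential_updatePair hij v (norm_normalize hp),
    gramPotential_updatePair hij v (norm_normalize hm), gramPotential_eq_pair_add hij v,
    hself, hself, hx, hy]
  linear_combination (1 + (∑ l ∈ ({i, j} : Finset ι)ᶜ, ∑ l' ∈ ({i, j} : Finset ι)ᶜ,
    ‖inner ℂ (v l) (v l')‖ ^ 2) / 4) * hsum + hrows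

end Gram

lemma eq_and_eq_of_le_weighted_average {a b m s t : ℝ} (hs : 0 < s) (ht : 0 < t)
    (hst : s + t = 1) (ha : a ≤ m) (hb : b ≤ m) (hm : m ≤ s * a + t * b) : a = m ∧ b = m := by
  have hm' : s * (m - a) + t * (m - b) ≤ 0 := by linear_combination hm + m * hst
  have hsa := mul_nonneg hs.le (sub_nonneg.2 ha)
  have htb := mul_nonneg ht.le (sub_nonneg.2 hb)
  exact ⟨by nlinarith, by nlinarith⟩

theorem exists_isMaxOn_forall_norm_inner_eq_one {ι E : Type*} [Fintype ι] [DecidableEq ι]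
    [NormedAddCommGroup E] [InnerProductSpace ℂ E] [ProperSpace E] [Nontrivial E]
    {f : (ι → E) → ℝ} (hf : Continuous f)
    (havg : ∀ v : ι → E, (∀ l, ‖v l‖ = 1) → ∀ i j, i ≠ j →
      f v ≤ ‖v i + v j‖ ^ 2 / 4 * f (updatePair v i j (normalize (v i + v j)))
        + ‖v i - v j‖ ^ 2 / 4 * f (updatePair v i j (normalize (v i - v j)))) :
    ∃ p : ι → E, (∀ l, ‖p l‖ = 1) ∧ IsMaxOn f {v | ∀ l, ‖v l‖ = 1} p ∧
      ∀ i j, ‖inner ℂ (p i) (p j)‖ = 1 := by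
  set S := {v : ι → E | ∀ l, ‖v l‖ = 1}
  have hS : IsCompact S := by
    convert isCompact_univ_pi fun _ : ι => isCompact_sphere (0 : E) 1 using 1
    ext v; simp [S]
  obtain ⟨x, hx⟩ := exists_norm_eq E zero_le_one
  obtain ⟨q, hqS, hq⟩ := hS.exists_isMaxOn ⟨fun _ => x, fun _ => hx⟩ hf.continuousOn
  have hK : IsCompact (S ∩ f ⁻¹' {f q}) := hS.inter_right (isClosed_singleton.preimage hf)
  obtain ⟨p, ⟨hpS, hpq⟩, hp⟩ :=
    hK.exists_isMaxOn ⟨q, hqS, rfl⟩ continuous_gramPotential.continuousOn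
  have hpq : f p = f q := hpq
  refine ⟨p, hpS, fun v hv => (hq hv).trans_eq hpq.symm, fun i j => ?_⟩
  rcases eq_or_ne i j with rfl | hij
  · simp [inner_self_eq_norm_sq_to_K, hpS i]
  by_contra hne
  obtain ⟨hadd, hsub⟩ := add_ne_zero_and_sub_ne_zero_of_norm_inner_ne_one (hpS i) hne
  have hsum : ‖p i + p j‖ ^ 2 / 4 + ‖p i - p j‖ ^ 2 / 4 = 1 := by
    rw [← add_div, parallelogram_law_with_norm ℂ, hpS i, hpS j]; norm_num
  have hnp : 0 < ‖p i + p j‖ ^ 2 / 4 := by positivity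
  have hnm : 0 < ‖p i - p j‖ ^ 2 / 4 := by positivity
  have hvpS := norm_updatePair_eq_one hpS i j (norm_normalize hadd)
  have hvmS := norm_updatePair_eq_one hpS i j (norm_normalize hsub)
  obtain ⟨hfp, hfm⟩ := eq_and_eq_of_le_weighted_average hnp hnm hsum (hq hvpS) (hq hvmS)
    (hpq ▸ havg p hpS i j hij)
  have hGp : gramPotential _ ≤ gramPotential p := hp ⟨hvpS, hfp⟩
  have hGm : gramPotential _ ≤ gramPotential p := hp ⟨hvmS, hfm⟩
  have hGavg := gramPotential_average hij (hpS i) (hpS j) hadd hsub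
  have hgap := sq_norm_inner_lt_one_of_ne (hpS i) (hpS j) hne
  linarith [mul_le_mul_of_nonneg_left hGp hnp.le, mul_le_mul_of_nonneg_left hGm hnm.le,
    congrArg (· * gramPotential p) hsum]

section QuadraticForm

variable {𝕜 E : Type*} [RCLike 𝕜] [NormedAddCommGroup E] [InnerProductSpace 𝕜 E]

lemma ContinuousLinearMap.reApplyInnerSelf_smul_sub_smul_add {X : E →L[𝕜] E}
    (hX : (X : E →ₗ[𝕜] E).IsSymmetric) (s t : ℝ) (u v : E) :
    X.reApplyInnerSelf ((s : 𝕜) • u - (t : 𝕜) • v) + s * t * X.reApplyInnerSelf (u + v)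
      = (s + t) * (s * X.reApplyInnerSelf u + t * X.reApplyInnerSelf v) := by
  have hcross : RCLike.re (inner 𝕜 (X v) u) = RCLike.re (inner 𝕜 (X u) v) := by
    rw [← inner_re_symm]; exact congrArg _ (hX u v).symm
  simp only [ContinuousLinearMap.reApplyInnerSelf_apply, map_sub, map_add, map_smul,
    inner_add_left, inner_add_right, inner_sub_left, inner_sub_right, inner_smul_left,
    inner_smul_right, RCLike.conj_ofReal, map_add, map_sub, RCLike.re_ofReal_mul, hcross]
  ring

lemma ContinuousLinearMap.IsPositive.reApplyInnerSelf_smul_sub_smul_le {X : E →L[𝕜] E}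
    (hX : X.IsPositive) {s t : ℝ} (hs : 0 ≤ s) (ht : 0 ≤ t) (u v : E) :
    X.reApplyInnerSelf ((s : 𝕜) • u - (t : 𝕜) • v)
      ≤ (s + t) * (s * X.reApplyInnerSelf u + t * X.reApplyInnerSelf v) := by
  rw [← X.reApplyInnerSelf_smul_sub_smul_add hX.isSymmetric]
  have := hX.2 (u + v)
  have : 0 ≤ s * t * X.reApplyInnerSelf (u + v) := by positivity
  linarith

lemma ContinuousLinearMap.reApplyInnerSelf_add_of_mem_orthogonal {K : Submodule 𝕜 E}
    [K.HasOrthogonalProjection] {X : E →L[𝕜] E}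
    (hX : X = K.starProjection ∘L X ∘L K.starProjection) (ψ : E) {δ : E} (hδ : δ ∈ Kᗮ) :
    X.reApplyInnerSelf (ψ + δ) = X.reApplyInnerSelf ψ := by
  have hXδ : X δ = 0 := by
    rw [hX]; simp [(K.starProjection_apply_eq_zero_iff).mpr hδ]
  have hXψ : X ψ ∈ K := by
    rw [hX]; exact K.starProjection_apply_mem _
  rw [ContinuousLinearMap.reApplyInnerSelf_apply, ContinuousLinearMap.reApplyInnerSelf_apply,
    map_add, hXδ, add_zero, inner_add_right, Submodule.inner_right_of_mem_orthogonal hXψ hδ,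
    add_zero]

end QuadraticForm

section ProductStates

variable {N k : ℕ}

noncomputable def permuteSites (σ : Equiv.Perm (Fin N)) (ψ : EuclideanSpace ℂ (Fin N → Fin k)) :
    EuclideanSpace ℂ (Fin N → Fin k) :=
  toLp 2 fun s => ψ (s ∘ σ)

lemma permuteSites_apply (σ : Equiv.Perm (Fin N)) (ψ : EuclideanSpace ℂ (Fin N → Fin k))
    (s : Fin N → Fin k) : permuteSites σ ψ s = ψ (s ∘ σ) :=
  rfl

lemma permuteSites_sub_mem_orthogonal (σ : Equiv.Perm (Fin N))
    (ψ : EuclideanSpace ℂ (Fin N → Fin k)) :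
    permuteSites σ ψ - ψ ∈ (symmSubspace N k)ᗮ := by
  intro w hw
  rw [inner_sub_right, sub_eq_zero, PiLp.inner_apply, PiLp.inner_apply]
  refine Fintype.sum_equiv (Equiv.arrowCongr σ.symm (Equiv.refl _)) _ _ fun s => ?_
  have hs : Equiv.arrowCongr σ.symm (Equiv.refl (Fin k)) s = s ∘ σ := by
    funext m; simp [Equiv.arrowCongr]
  rw [hs, ← hw σ s]
  rfl

lemma continuous_productVec :
    Continuous fun v : Fin N → EuclideanSpace ℂ (Fin k) => productVec (ofLp ∘ v) :=
  (PiLp.continuous_toLp 2 _).comp (by unfold Function.comp; fun_prop)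

lemma productVec_smul_const (r : Fin N → ℂ) (b : EuclideanSpace ℂ (Fin k)) :
    productVec (ofLp ∘ fun l => r l • b) = (∏ l, r l) • productVec fun _ => ofLp b := by
  ext s
  simp [productVec, prod_mul_distrib]

lemma productVec_apply_eq_mul_mul_prod_compl {i j : Fin N} (hij : i ≠ j)
    (a : Fin N → Fin k → ℂ) (s : Fin N → Fin k) :
    productVec a s = a i (s i) * a j (s j) * ∏ l ∈ ({i, j} : Finset (Fin N))ᶜ, a l (s l) :=
  Finset.prod_eq_mul_mul_prod_compl hij _

lemma productVec_updatePair_apply {i j : Fin N} (hij : i ≠ j)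
    (v : Fin N → EuclideanSpace ℂ (Fin k)) (u : EuclideanSpace ℂ (Fin k)) (s : Fin N → Fin k) :
    productVec (ofLp ∘ updatePair v i j u) s
      = u (s i) * u (s j) * ∏ l ∈ ({i, j} : Finset (Fin N))ᶜ, v l (s l) := by
  rw [productVec_apply_eq_mul_mul_prod_compl hij]
  simp only [Function.comp_apply, updatePair_apply_left, updatePair_apply_right]
  rw [prod_congr rfl fun l hl => by rw [updatePair_apply_of_mem_compl u hl]]

lemma productVec_updatePair_smul {i j : Fin N} (hij : i ≠ j)
    (v : Fin N → EuclideanSpace ℂ (Fin k)) (c : ℂ) (u : EuclideanSpace ℂ (Fin k)) :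
    productVec (ofLp ∘ updatePair v i j (c • u))
      = c ^ 2 • productVec (ofLp ∘ updatePair v i j u) := by
  ext s
  simp only [PiLp.smul_apply, smul_eq_mul, productVec_updatePair_apply hij]
  ring

lemma productVec_updatePair_eq_smul_normalize {i j : Fin N} (hij : i ≠ j)
    (v : Fin N → EuclideanSpace ℂ (Fin k)) (w : EuclideanSpace ℂ (Fin k)) :
    productVec (ofLp ∘ updatePair v i j w)
      = ((‖w‖ ^ 2 : ℝ) : ℂ) • productVec (ofLp ∘ updatePair v i j (normalize w)) := by
  conv_lhs => rw [← norm_smul_normalize w, RCLike.real_smul_eq_coe_smul (K := ℂ),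
    productVec_updatePair_smul hij]
  push_cast
  rfl

lemma productVec_add_permuteSites_swap {i j : Fin N} (hij : i ≠ j)
    (v : Fin N → EuclideanSpace ℂ (Fin k)) :
    productVec (ofLp ∘ v) + permuteSites (Equiv.swap i j) (productVec (ofLp ∘ v))
      = (2⁻¹ : ℂ) • (productVec (ofLp ∘ updatePair v i j (v i + v j))
        - productVec (ofLp ∘ updatePair v i j (v i - v j))) := by
  ext s
  have hswap : productVec (ofLp ∘ v) (s ∘ Equiv.swap i j)
      = v i (s j) * v j (s i) * ∏ l ∈ ({i, j} : Finset (Fin N))ᶜ, v l (s l) := by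
    rw [productVec_apply_eq_mul_mul_prod_compl hij]
    congr 1
    · simp
    · refine Finset.prod_congr rfl fun l hl => ?_
      simp only [mem_compl, mem_insert, mem_singleton, not_or] at hl
      simp [Equiv.swap_apply_of_ne_of_ne hl.1 hl.2]
  rw [PiLp.add_apply, permuteSites_apply, hswap, productVec_apply_eq_mul_mul_prod_compl hij,
    PiLp.smul_apply, PiLp.sub_apply, productVec_updatePair_apply hij,
    productVec_updatePair_apply hij]
  simp only [PiLp.add_apply, PiLp.sub_apply, Function.comp_apply, smul_eq_mul]
  ring

theorem reApplyInnerSelf_productVec_le_average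
    {X : EuclideanSpace ℂ (Fin N → Fin k) →L[ℂ] EuclideanSpace ℂ (Fin N → Fin k)}
    (hpos : X.IsPositive)
    (hXS : X = (symmSubspace N k).starProjection ∘L X ∘L (symmSubspace N k).starProjection)
    {v : Fin N → EuclideanSpace ℂ (Fin k)} {i j : Fin N} (hij : i ≠ j)
    (hx : ‖v i‖ = 1) (hy : ‖v j‖ = 1) :
    X.reApplyInnerSelf (productVec (ofLp ∘ v))
      ≤ ‖v i + v j‖ ^ 2 / 4 * X.reApplyInnerSelf
          (productVec (ofLp ∘ updatePair v i j (normalize (v i + v j))))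
        + ‖v i - v j‖ ^ 2 / 4 * X.reApplyInnerSelf
          (productVec (ofLp ∘ updatePair v i j (normalize (v i - v j)))) := by
  set φ := productVec (ofLp ∘ v)
  set ψp := productVec (ofLp ∘ updatePair v i j (normalize (v i + v j)))
  set ψm := productVec (ofLp ∘ updatePair v i j (normalize (v i - v j)))
  have hsum : ‖v i + v j‖ ^ 2 + ‖v i - v j‖ ^ 2 = 4 := by
    rw [parallelogram_law_with_norm ℂ, hx, hy]; norm_num
  have hsym : X.reApplyInnerSelf (φ + permuteSites (Equiv.swap i j) φ)
      = 4 * X.reApplyInnerSelf φ := by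
    rw [show φ + permuteSites (Equiv.swap i j) φ
        = (2 : ℂ) • φ + (permuteSites (Equiv.swap i j) φ - φ) by rw [two_smul]; abel,
      X.reApplyInnerSelf_add_of_mem_orthogonal hXS _ (permuteSites_sub_mem_orthogonal _ _),
      X.reApplyInnerSelf_smul]
    norm_num
  rw [productVec_add_permuteSites_swap hij,
    productVec_updatePair_eq_smul_normalize hij v (v i + v j),
    productVec_updatePair_eq_smul_normalize hij v (v i - v j), X.reApplyInnerSelf_smul,
    show ‖(2⁻¹ : ℂ)‖ ^ 2 = 1 / 4 by norm_num] at hsym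
  have hconv : X.reApplyInnerSelf
        (((‖v i + v j‖ ^ 2 : ℝ) : ℂ) • ψp - ((‖v i - v j‖ ^ 2 : ℝ) : ℂ) • ψm)
      ≤ (‖v i + v j‖ ^ 2 + ‖v i - v j‖ ^ 2)
        * (‖v i + v j‖ ^ 2 * X.reApplyInnerSelf ψp + ‖v i - v j‖ ^ 2 * X.reApplyInnerSelf ψm) :=
    hpos.reApplyInnerSelf_smul_sub_smul_le (sq_nonneg _) (sq_nonneg _) ψp ψm
  rw [hsum] at hconv
  linarith

end ProductStates

lemma norm_toLp_eq_one_iff {k : ℕ} (x : Fin k → ℂ) :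
    ‖toLp 2 x‖ = 1 ↔ ∑ j, ‖x j‖ ^ 2 = 1 := by
  rw [EuclideanSpace.norm_eq, Real.sqrt_eq_one]

theorem stmt_16_general (N k : ℕ) (hk : 0 < k)
    (X : EuclideanSpace ℂ (Fin N → Fin k) →L[ℂ] EuclideanSpace ℂ (Fin N → Fin k))
    (hpos : X.IsPositive)
    (hXS : X = ((symmSubspace N k).subtypeL.comp
          (symmSubspace N k).orthogonalProjectionOnto).comp
        (X.comp ((symmSubspace N k).subtypeL.comp
          (symmSubspace N k).orthogonalProjectionOnto))) :
    ∃ M : ℝ,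
      IsGreatest {x : ℝ | ∃ a : Fin N → Fin k → ℂ,
        (∀ i, ∑ j, ‖a i j‖ ^ 2 = 1) ∧
        x = (inner ℂ (productVec a) (X (productVec a)) : ℂ).re} M ∧
      IsGreatest {x : ℝ | ∃ b : Fin k → ℂ,
        (∑ j, ‖b j‖ ^ 2 = 1) ∧
        x = (inner ℂ (productVec fun _ => b) (X (productVec fun _ => b)) : ℂ).re} M := by
  have : Nonempty (Fin k) := ⟨⟨0, hk⟩⟩
  set f := fun v : Fin N → EuclideanSpace ℂ (Fin k) => X.reApplyInnerSelf (productVec (ofLp ∘ v))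
  obtain ⟨p, hpS, hpmax, hpal⟩ :=
    exists_isMaxOn_forall_norm_inner_eq_one
      (X.reApplyInnerSelf_continuous.comp continuous_productVec)
      fun v hv i j hij => reApplyInnerSelf_productVec_le_average hpos hXS hij (hv i) (hv j)
  obtain ⟨b, hb, r, hr, rfl⟩ := exists_eq_smul_of_norm_inner_eq_one hpS hpal
  have hsym : f (fun l => r l • b) = X.reApplyInnerSelf (productVec fun _ => ofLp b) := by
    simp only [f, productVec_smul_const, X.reApplyInnerSelf_smul, norm_prod, hr,
      prod_const_one, one_pow, one_mul]
  have hval : ∀ ψ, (inner ℂ ψ (X ψ)).re = X.reApplyInnerSelf ψ := fun ψ =>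
    inner_re_symm (𝕜 := ℂ) ψ (X ψ)
  refine ⟨f fun l => r l • b, ⟨⟨ofLp ∘ fun l => r l • b, fun l => ?_, (hval _).symm⟩, ?_⟩,
    ⟨⟨ofLp b, (norm_toLp_eq_one_iff _).mp hb, by rw [hval, hsym]⟩, ?_⟩⟩
  · exact (norm_toLp_eq_one_iff _).mp (by simpa using hpS l)
  · rintro _ ⟨a, ha, rfl⟩
    exact (hval _).trans_le (hpmax fun l => (norm_toLp_eq_one_iff _).mpr (ha l))
  · rintro _ ⟨c, hc, rfl⟩
    exact (hval _).trans_le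
      (hpmax (a := fun _ => toLp 2 c) fun _ => (norm_toLp_eq_one_iff _).mpr hc)

/-- For a positive semidefinite operator X on (ℂ^k)^⊗N with X = Π_S X Π_S
(Π_S the projector onto the symmetric subspace) and N ≥ 3, the maximum of
⟨φ|X|φ⟩ over product states equals the maximum over symmetric product states. -/
theorem stmt_16 (N k : ℕ) (hN : 3 ≤ N) (hk : 0 < k)
    (X : EuclideanSpace ℂ (Fin N → Fin k) →L[ℂ] EuclideanSpace ℂ (Fin N → Fin k))
    (hpos : X.IsPositive)
    (hXS : X = ((symmSubspace N k).subtypeL.comp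
          (symmSubspace N k).orthogonalProjectionOnto).comp
        (X.comp ((symmSubspace N k).subtypeL.comp
          (symmSubspace N k).orthogonalProjectionOnto))) :
    ∃ M : ℝ,
      IsGreatest {x : ℝ | ∃ a : Fin N → Fin k → ℂ,
        (∀ i, ∑ j, ‖a i j‖ ^ 2 = 1) ∧
        x = (inner ℂ (productVec a) (X (productVec a)) : ℂ).re} M ∧
      IsGreatest {x : ℝ | ∃ b : Fin k → ℂ,
        (∑ j, ‖b j‖ ^ 2 = 1) ∧
        x = (inner ℂ (productVec fun _ => b) (X (productVec fun _ => b)) : ℂ).re} M :=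
  stmt_16_general N k hk X hpos hXS
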